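/- arXiv:0705.4676 — 3 statements merged into one kernel-verified Lean document; each statement's English description precedes it below -/
import Mathlib

section
/- For n ≥ 2, |Σ| ≥ 2, and any integer B, Randomized Integer-Division hashing over Z/2^L Z is not 2-universal: there exist two distinct n-grams w₁ ≠ w₂ with P(h(w₁) = h(w₂)) > 2^{-L}. In particular, it is not pairwise independent. -/
/-- Uniform probability of an event over a finite sample space. -/
noncomputable def prob (Ω : Type*) (p : Ω → Prop) : ℚ :=
  (Nat.card {ω : Ω // p ω} : ℚ) / (Nat.card Ω : ℚ)

/-! Take `w₁ = a⋯a` and let `w₂` replace the letters at a set `s` of positions by `b`. The hash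
difference is then `K * (h₁ a - h₁ b)` with `K = ∑ i ∈ s, B ^ (n - 1 - i)`, and `s = {n-2}` for `B`
even, `s = {n-2, n-1}` for `B` odd makes `K` even. So `w₁, w₂` collide as soon as
`h₁ a - h₁ b ∈ {0, 2 ^ (L-1)}`; since `h₁ a - h₁ b` is uniformly distributed, this has probability
`2 / 2 ^ L`. A pairwise independent family would instead collide with probability exactly
`1 / 2 ^ L`. -/

open Finset

theorem prob_congr {Ω : Type*} {p q : Ω → Prop} (h : ∀ ω, p ω ↔ q ω) : prob Ω p = prob Ω q :=
  congrArg (prob Ω) (funext fun ω => propext (h ω))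

theorem prob_nonneg {Ω : Type*} (p : Ω → Prop) : 0 ≤ prob Ω p := by
  unfold prob; positivity

section FiniteSpace

variable {Ω : Type*} [Fintype Ω]

theorem prob_true [Nonempty Ω] : prob Ω (fun _ => True) = 1 := by
  simp [prob, Nat.card_eq_fintype_card, Fintype.card_ne_zero]

theorem prob_eq_sum_prob_and {Y : Type*} [Fintype Y] (f : Ω → Y) (p : Ω → Prop) :
    prob Ω p = ∑ y, prob Ω (fun ω => f ω = y ∧ p ω) := by
  classical
  simp only [prob, ← sum_div, Nat.card_eq_fintype_card, Fintype.card_subtype]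
  congr 1
  rw_mod_cast [card_eq_sum_card_fiberwise (f := f) (t := univ) (fun _ _ => mem_univ _)]
  simp [filter_filter, and_comm]

theorem prob_eq_of_uniform_pair {Y : Type*} [Fintype Y] [Nonempty Y] (f g : Ω → Y)
    (h : ∀ y y', prob Ω (fun ω => f ω = y ∧ g ω = y') = 1 / Nat.card Y ^ 2) :
    prob Ω (fun ω => f ω = g ω) = 1 / Nat.card Y := by
  have hdiag (y : Y) : prob Ω (fun ω => f ω = y ∧ f ω = g ω) = 1 / Nat.card Y ^ 2 :=
    (prob_congr fun ω => ⟨fun ⟨hy, hfg⟩ => ⟨hy, hfg ▸ hy⟩,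
      fun ⟨hy, hgy⟩ => ⟨hy, hy.trans hgy.symm⟩⟩).trans (h y y)
  rw [prob_eq_sum_prob_and f]
  simp only [hdiag]
  have hY : (Nat.card Y : ℚ) ≠ 0 := by simp [Nat.card_eq_fintype_card]
  rw [sum_const, card_univ, ← Nat.card_eq_fintype_card, nsmul_eq_mul]
  field_simp

theorem prob_apply_sub_apply_eq {σ G : Type*} [Fintype σ] [AddCommGroup G] [Fintype G]
    {a b : σ} (hab : a ≠ b) (d : G) : prob (σ → G) (fun h => h a - h b = d) = 1 / Nat.card G := by
  classical
  let φ : (σ → G) →+ G := Pi.evalAddMonoidHom (fun _ => G) a - Pi.evalAddMonoidHom (fun _ => G) b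
  have hφ : Function.Surjective φ := fun y => ⟨Pi.single a y, by simp [φ, hab.symm]⟩
  have hfiber (y : G) : prob (σ → G) (fun h => φ h = y) = prob (σ → G) (fun h => φ h = d) := by
    simp only [prob, Nat.card_eq_fintype_card, Fintype.card_subtype]
    rw [AddMonoidHom.card_fiber_eq_of_mem_range φ (hφ y) (hφ d)]
  have htotal := prob_eq_sum_prob_and φ (fun _ => True)
  simp only [and_true, hfiber, sum_const, card_univ, prob_true] at htotal
  have hG : (Nat.card G : ℚ) ≠ 0 := by simp [Nat.card_eq_fintype_card]
  rw [eq_div_iff hG, mul_comm, ← nsmul_eq_mul, Nat.card_eq_fintype_card]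
  exact htotal.symm

theorem card_div_card_le_prob_of_apply_sub_apply_mem {σ G : Type*} [Fintype σ] [AddCommGroup G]
    [Fintype G] {a b : σ} (hab : a ≠ b) (S : Finset G) {p : (σ → G) → Prop}
    (hp : ∀ h, h a - h b ∈ S → p h) :
    (#S : ℚ) / Nat.card G ≤ prob (σ → G) p := by
  classical
  calc (#S : ℚ) / Nat.card G = ∑ y ∈ S, prob (σ → G) (fun h => h a - h b = y) := by
        rw [div_eq_mul_one_div]; simp [prob_apply_sub_apply_eq hab]
    _ = ∑ y ∈ S, prob (σ → G) (fun h => h a - h b = y ∧ p h) :=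
        sum_congr rfl fun y hy => prob_congr fun h => ⟨fun e => ⟨e, hp h (e ▸ hy)⟩, And.left⟩
    _ ≤ ∑ y, prob (σ → G) (fun h => h a - h b = y ∧ p h) :=
        sum_le_sum_of_subset_of_nonneg (subset_univ S) fun _ _ _ => prob_nonneg _
    _ = prob (σ → G) p := (prob_eq_sum_prob_and _ p).symm

end FiniteSpace

def polyHash {R σ : Type*} [Semiring R] {n : ℕ} (B : R) (h₁ : σ → R) (w : Fin n → σ) : R :=
  ∑ i : Fin n, B ^ (n - 1 - (i : ℕ)) * h₁ (w i)

theorem polyHash_const_sub_piecewise {R σ : Type*} [CommRing R] {n : ℕ} (B : R) (h₁ : σ → R)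
    (s : Finset (Fin n)) (a b : σ) :
    polyHash B h₁ (fun _ : Fin n => a) - polyHash B h₁ (s.piecewise (fun _ => b) (fun _ => a))
      = (∑ i ∈ s, B ^ (n - 1 - (i : ℕ))) * (h₁ a - h₁ b) := by
  rw [polyHash, polyHash, ← sum_sub_distrib, sum_mul, ← sum_subset (subset_univ s)]
  · exact sum_congr rfl fun i hi => by simp [hi, mul_sub]
  · intro i _ hi
    simp [hi]

theorem exists_even_weight {n : ℕ} (hn : 2 ≤ n) (B : ℕ) :
    ∃ s : Finset (Fin n), s.Nonempty ∧ Even (∑ i ∈ s, B ^ (n - 1 - (i : ℕ))) := by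
  rcases Nat.even_or_odd B with hB | hB
  · refine ⟨{⟨n - 2, by omega⟩}, singleton_nonempty _, ?_⟩
    rwa [sum_singleton, show n - 1 - (n - 2) = 1 by omega, pow_one]
  · refine ⟨{⟨n - 2, by omega⟩, ⟨n - 1, by omega⟩}, insert_nonempty _ _, ?_⟩
    rw [sum_pair (by simp [Fin.ext_iff]; omega), show n - 1 - (n - 2) = 1 by omega,
      Nat.sub_self, pow_one, pow_zero]
    exact hB.add_one

theorem natCast_mul_two_pow_pred_eq_zero {L K : ℕ} (hL : 1 ≤ L) (hK : Even K) :
    (K : ZMod (2 ^ L)) * 2 ^ (L - 1) = 0 := by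
  obtain ⟨k, rfl⟩ := hK
  calc ((k + k : ℕ) : ZMod (2 ^ L)) * 2 ^ (L - 1) = k * 2 ^ (L - 1 + 1) := by push_cast; ring
    _ = 0 := by
      rw [Nat.sub_add_cancel hL]
      exact mul_eq_zero_of_right _ (by exact_mod_cast ZMod.natCast_self (2 ^ L))

theorem two_pow_pred_ne_zero {L : ℕ} (hL : 1 ≤ L) : (2 : ZMod (2 ^ L)) ^ (L - 1) ≠ 0 := by
  have h : ¬ 2 ^ L ∣ 2 ^ (L - 1) :=
    Nat.not_dvd_of_pos_of_lt (by positivity) (Nat.pow_lt_pow_right one_lt_two (by omega))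
  rw [← ZMod.natCast_eq_zero_iff] at h
  exact_mod_cast h

theorem one_div_two_pow_lt_prob_even_mul_sub_eq_zero {σ : Type*} [Fintype σ] {L K : ℕ}
    (hL : 1 ≤ L) (hK : Even K) {a b : σ} (hab : a ≠ b) :
    (1 : ℚ) / 2 ^ L < prob (σ → ZMod (2 ^ L)) (fun h => (K : ZMod (2 ^ L)) * (h a - h b) = 0) := by
  classical
  have hS : #{0, (2 : ZMod (2 ^ L)) ^ (L - 1)} = 2 := card_pair (two_pow_pred_ne_zero hL).symm
  refine lt_of_lt_of_le ?_
    (card_div_card_le_prob_of_apply_sub_apply_mem hab {0, 2 ^ (L - 1)} fun h hd => ?_)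
  · rw [hS, Nat.card_zmod]
    push_cast
    gcongr
    norm_num
  · rcases mem_insert.1 hd with hd | hd
    · rw [hd, mul_zero]
    · rw [mem_singleton.1 hd, natCast_mul_two_pow_pred_eq_zero hL hK]

/-- Randomized Integer-Division hashing is never 2-universal (hence not pairwise
independent) for n ≥ 2 over an alphabet with at least two symbols. -/
theorem integer_division_not_two_universal
    {σ : Type*} [Fintype σ] (n L B : ℕ) (hn : 2 ≤ n) (hL : 1 ≤ L)
    (hσ : 2 ≤ Fintype.card σ) :
    (∃ w₁ w₂ : Fin n → σ, w₁ ≠ w₂ ∧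
      (1 : ℚ) / 2 ^ L <
        prob (σ → ZMod (2 ^ L))
          (fun h₁ => (∑ i : Fin n, (B : ZMod (2 ^ L)) ^ (n - 1 - (i : ℕ)) * h₁ (w₁ i))
            = ∑ i : Fin n, (B : ZMod (2 ^ L)) ^ (n - 1 - (i : ℕ)) * h₁ (w₂ i))) ∧
    ¬ (∀ w₁ w₂ : Fin n → σ, w₁ ≠ w₂ → ∀ y y' : ZMod (2 ^ L),
        prob (σ → ZMod (2 ^ L))
          (fun h₁ => (∑ i : Fin n, (B : ZMod (2 ^ L)) ^ (n - 1 - (i : ℕ)) * h₁ (w₁ i)) = y ∧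
            (∑ i : Fin n, (B : ZMod (2 ^ L)) ^ (n - 1 - (i : ℕ)) * h₁ (w₂ i)) = y')
          = 1 / 2 ^ (2 * L)) := by
  classical
  obtain ⟨a, b, hab⟩ := Fintype.exists_pair_of_one_lt_card hσ
  obtain ⟨s, ⟨i, hi⟩, hs⟩ := exists_even_weight hn B
  set w₁ : Fin n → σ := fun _ => a
  set w₂ : Fin n → σ := s.piecewise (fun _ => b) (fun _ => a)
  have hne : w₁ ≠ w₂ := fun h => hab (by simpa [w₂, hi] using congrFun h i)
  have hcoll : (1 : ℚ) / 2 ^ L <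
      prob (σ → ZMod (2 ^ L)) (fun h₁ => polyHash (B : ZMod (2 ^ L)) h₁ w₁ = polyHash _ h₁ w₂) :=
    (one_div_two_pow_lt_prob_even_mul_sub_eq_zero hL hs hab).trans_eq <| prob_congr fun h₁ => by
      rw [← sub_eq_zero (a := polyHash _ _ _), polyHash_const_sub_piecewise]
      push_cast
      rfl
  refine ⟨⟨w₁, w₂, hne, hcoll⟩, fun huniform => hcoll.ne' ?_⟩
  rw [prob_eq_of_uniform_pair, Nat.card_zmod]
  · push_cast; rfl
  · intro y y'
    refine (huniform w₁ w₂ hne y y').trans ?_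
    rw [Nat.card_zmod]
    push_cast
    ring
end

section
/- Cyclic hashing is not uniform when n is even: with h₁ : Σ → GF(2)[x]/(x^L+1) a uniformly random function and h(a₁,…,a_n) = Σᵢ h₁(aᵢ) x^{n-i} mod (x^L+1), for n even and n ≤ L we have P(h(a,a,…,a) = 0) ≥ 2^{-(L-1)} > 2^{-L}. -/
open Polynomial

/-! In `GF(2)[x]/(x^L + 1)` the all-ones element `q = 1 + x + ⋯ + x^(L-1)` is nonzero (its degree
is below `L`) and is fixed by multiplication by `x`, because `(x + 1) q = x^L + 1 = 0`. Hence
`q · (x^(n-1) + ⋯ + x + 1) = n • q = 0` for even `n`, so the event `h(a, …, a) = 0` holds for both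
values `h₁ a = 0` and `h₁ a = q`. Since `h₁ a` is uniform on the `2^L` elements of the ring, the
event has probability at least `2 / 2^L = 2^-(L-1)`. -/

theorem prob_comp_eval {σ R : Type*} [Finite σ] [Finite R] [Nonempty R] (a : σ) (p : R → Prop) :
    prob (σ → R) (fun h => p (h a)) = prob R p := by
  classical
  have hsplit : {h : σ → R // p (h a)} ≃ {v // p v} × ({j // j ≠ a} → R) :=
    ((Equiv.funSplitAt a R).subtypeEquiv fun _ => Iff.rfl).trans
      Equiv.prodSubtypeFstEquivSubtypeProd
  have hD : (Nat.card ({j // j ≠ a} → R) : ℚ) ≠ 0 := by exact_mod_cast Nat.card_pos.ne'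
  rw [prob, prob, Nat.card_congr hsplit, Nat.card_congr (Equiv.funSplitAt a R), Nat.card_prod,
    Nat.card_prod]
  push_cast
  exact mul_div_mul_right _ _ hD

theorem two_div_card_le_prob {α : Type*} [Finite α] {p : α → Prop} {u v : α} (huv : u ≠ v)
    (hu : p u) (hv : p v) : 2 / Nat.card α ≤ prob α p := by
  have h2 : 1 < Nat.card {ω // p ω} :=
    Finite.one_lt_card_iff_nontrivial.mpr ⟨⟨u, hu⟩, ⟨v, hv⟩, by simpa using huv⟩
  rw [prob]
  gcongr
  exact_mod_cast h2

theorem Polynomial.Monic.natCard_quotient_span {K : Type*} [CommRing K] {f : K[X]}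
    (hf : f.Monic) : Nat.card (K[X] ⧸ Ideal.span {f}) = Nat.card K ^ f.natDegree := by
  rw [Nat.card_congr (α := K[X] ⧸ Ideal.span {f}) (AdjoinRoot.powerBasisAux' hf).equivFun.toEquiv,
    Nat.card_fun, Nat.card_fin]

section CyclicRing

variable {K : Type*} [CommRing K] {L : ℕ}

local notation "𝓡" => K[X] ⧸ Ideal.span {(X : K[X]) ^ L + 1}

variable (K L) in
noncomputable def allOnes : 𝓡 := Ideal.Quotient.mk _ (∑ i ∈ Finset.range L, X ^ i)

theorem Polynomial.monic_X_pow_add_one (hL : L ≠ 0) : ((X : K[X]) ^ L + 1).Monic := by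
  simpa using monic_X_pow_add_C (1 : K) hL

theorem Polynomial.natDegree_X_pow_add_one [Nontrivial K] : ((X : K[X]) ^ L + 1).natDegree = L := by
  rw [← C_1, natDegree_X_pow_add_C]

theorem natCard_quotient_X_pow_add_one [Nontrivial K] (hL : L ≠ 0) :
    Nat.card 𝓡 = Nat.card K ^ L := by
  rw [(monic_X_pow_add_one hL).natCard_quotient_span, natDegree_X_pow_add_one]

theorem allOnes_ne_zero [Nontrivial K] (hL : L ≠ 0) : allOnes K L ≠ 0 := by
  have hdeg :
      (∑ i ∈ Finset.range L, (X : K[X]) ^ i).natDegree < ((X : K[X]) ^ L + 1).natDegree := by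
    rw [natDegree_X_pow_add_one]
    refine (natDegree_sum_le_of_forall_le _ _ fun i hi => ?_).trans_lt (Nat.sub_one_lt hL)
    exact (natDegree_X_pow_le i).trans (Nat.le_sub_one_of_lt (Finset.mem_range.mp hi))
  rw [allOnes, Ne, Ideal.Quotient.eq_zero_iff_mem, Ideal.mem_span_singleton]
  exact (monic_X_pow_add_one hL).not_dvd_of_natDegree_lt (monic_geom_sum_X hL).ne_zero hdeg

theorem allOnes_mul_X [CharP K 2] :
    allOnes K L * Ideal.Quotient.mk _ X = allOnes K L := by
  rw [allOnes, ← map_mul, Ideal.Quotient.eq, Ideal.mem_span_singleton, ← mul_sub_one,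
    geom_sum_mul, CharTwo.sub_eq_add]

theorem allOnes_mul_X_pow [CharP K 2] (k : ℕ) :
    allOnes K L * Ideal.Quotient.mk _ X ^ k = allOnes K L := by
  induction k with
  | zero => rw [pow_zero, mul_one]
  | succ k ih => rw [pow_succ, ← mul_assoc, ih, allOnes_mul_X]

theorem sum_allOnes_mul_X_pow_eq_zero [CharP K 2] {n : ℕ} (hn : Even n) (e : Fin n → ℕ) :
    ∑ i, allOnes K L * Ideal.Quotient.mk _ X ^ e i = 0 := by
  simp only [allOnes_mul_X_pow, Finset.sum_const, Finset.card_univ, Fintype.card_fin]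
  rw [nsmul_eq_mul, ← map_natCast (algebraMap K 𝓡), (CharP.cast_eq_zero_iff K 2 n).2 hn.two_dvd,
    map_zero, zero_mul]

end CyclicRing

/-- Cyclic hashing is not uniform for n even. -/
theorem cyclic_not_uniform_even_n
    {σ : Type*} [Fintype σ] (n L : ℕ) (hn : Even n) (hn0 : 0 < n) (hnL : n ≤ L)
    (a : σ) :
    (1 : ℚ) / 2 ^ (L - 1) ≤
      prob (σ → Polynomial (ZMod 2) ⧸ Ideal.span {(X : Polynomial (ZMod 2)) ^ L + 1})
        (fun h₁ => (∑ i : Fin n, h₁ a *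
          (Ideal.Quotient.mk (Ideal.span {(X : Polynomial (ZMod 2)) ^ L + 1}) X)
            ^ (n - 1 - (i : ℕ))) = 0) ∧
    (1 : ℚ) / 2 ^ L <
      prob (σ → Polynomial (ZMod 2) ⧸ Ideal.span {(X : Polynomial (ZMod 2)) ^ L + 1})
        (fun h₁ => (∑ i : Fin n, h₁ a *
          (Ideal.Quotient.mk (Ideal.span {(X : Polynomial (ZMod 2)) ^ L + 1}) X)
            ^ (n - 1 - (i : ℕ))) = 0) := by
  have hL : L ≠ 0 := by omega
  have hcard := natCard_quotient_X_pow_add_one (K := ZMod 2) hL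
  rw [Nat.card_zmod] at hcard
  have : Finite ((ZMod 2)[X] ⧸ Ideal.span {(X : (ZMod 2)[X]) ^ L + 1}) :=
    Nat.finite_of_card_ne_zero (by rw [hcard]; positivity)
  have hprob := two_div_card_le_prob
    (p := fun v => ∑ i : Fin n, v * Ideal.Quotient.mk _ (X : (ZMod 2)[X]) ^ (n - 1 - (i : ℕ)) = 0)
    (allOnes_ne_zero hL).symm (by simp) (sum_allOnes_mul_X_pow_eq_zero hn _)
  rw [hcard, Nat.cast_pow, Nat.cast_ofNat, ← prob_comp_eval a] at hprob
  have hhalf : (1 : ℚ) / 2 ^ (L - 1) = 2 / 2 ^ L := by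
    rw [div_eq_div_iff (by positivity) (by positivity), one_mul, ← pow_succ',
      Nat.sub_add_cancel (by omega)]
  refine ⟨hhalf ▸ hprob, lt_of_lt_of_le ?_ hprob⟩
  gcongr
  norm_num
end

section
/- Cyclic hashing becomes pairwise independent after discarding n−1 consecutive bits: let h₁ : Σ → GF(2)[x]/(x^L+1) be uniformly random, define h(a₁,…,a_n) = Σᵢ h₁(aᵢ) x^{n-i} mod (x^L+1), and fix any n−1 consecutive (mod L) coefficient positions. Then for any two distinct n-grams a ≠ a' and any values y, y' of the remaining L−n+1 coefficients, P(h(a) ≡ y and h(a') ≡ y' on the remaining positions) = 2^{-2(L-n+1)}. -/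
open Polynomial

/-!
Over GF(2) the modulus `X^L + 1` is `X^L - 1`, and over any field the hash
`h(a) = ∑ᵢ h₁(aᵢ) X^(n-1-i) mod X^L - 1` is linear in `h₁`, so the pair of windows
of `h(a)` and `h(a')` is uniformly distributed as soon as the linear map `h₁ ↦ (windows)` is
onto. Pick `i₀` with `a i₀ ≠ a' i₀` and try `h₁ = g + [· = a i₀] z`: both hashes contain
`S g` with `S = ∑ᵢ X^(n-1-i)`, and they differ by `q z` where `q ≠ 0` has degree `< n`. So it
suffices that for every nonzero `q` of degree `< n`, the `L - n + 1` cyclically consecutive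
coefficients of `q z mod X^L - 1` take every value. Writing `q = X^e q₀` with `q₀(0) ≠ 0`,
multiplication by the unit `X` only rotates coefficients, and the first `L - n + 1`
coefficients of `q₀ w` with `deg w ≤ L - n` are prescribed by solving a unitriangular system,
i.e. by inverting `q₀` modulo `X^(L-n+1)`.
-/

namespace Polynomial

section CommRing

variable {R : Type*} [CommRing R]

lemma dvd_sub_modByMonic (p q : R[X]) : q ∣ p - p %ₘ q :=
  ⟨p /ₘ q, by rw [modByMonic_eq_sub_mul_div, sub_sub_cancel]⟩

lemma mul_modByMonic_modByMonic {f : R[X]} (hf : f.Monic) (p q : R[X]) :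
    (p * (q %ₘ f)) %ₘ f = (p * q) %ₘ f := by
  refine modByMonic_eq_of_dvd_sub hf ?_
  rw [show p * (q %ₘ f) - p * q = -(p * (q - q %ₘ f)) by ring]
  exact (dvd_mul_of_dvd_right (dvd_sub_modByMonic q f) p).neg_right

lemma X_pow_sub_one_dvd_X_pow_sub_X_pow_mod (L a : ℕ) :
    (X ^ L - 1 : R[X]) ∣ X ^ a - X ^ (a % L) := by
  have h : (X : R[X]) ^ a - X ^ (a % L) = X ^ (a % L) * ((X ^ L) ^ (a / L) - 1 ^ (a / L)) := by
    rw [one_pow, mul_sub, mul_one, ← pow_mul, ← pow_add, Nat.mod_add_div]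
  rw [h]
  exact dvd_mul_of_dvd_right (sub_dvd_pow_sub_pow _ _ _) _

lemma monic_X_pow_sub_one {L : ℕ} (hL : L ≠ 0) : (X ^ L - 1 : R[X]).Monic := by
  simpa using monic_X_pow_sub_C (1 : R) hL

variable [Nontrivial R]

lemma degree_X_pow_sub_one {L : ℕ} (hL : L ≠ 0) : (X ^ L - 1 : R[X]).degree = L := by
  simpa using degree_X_pow_sub_C (Nat.pos_of_ne_zero hL) (1 : R)

lemma natDegree_modByMonic_X_pow_sub_one_lt {L : ℕ} (hL : L ≠ 0) (p : R[X]) :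
    (p %ₘ (X ^ L - 1)).natDegree < L := by
  have hdeg : (X ^ L - 1 : R[X]).natDegree = L := by
    simpa using natDegree_X_pow_sub_C (r := (1 : R))
  have hne : (X ^ L - 1 : R[X]) ≠ 1 := fun h => hL (by rw [← hdeg, h, natDegree_one])
  simpa [hdeg] using natDegree_modByMonic_lt p (monic_X_pow_sub_one hL) hne

lemma X_pow_mul_modByMonic_X_pow_sub_one {L : ℕ} (hL : L ≠ 0) (d : ℕ) (p : R[X]) :
    (X ^ d * p) %ₘ (X ^ L - 1) =
      ∑ k ∈ Finset.range L, C ((p %ₘ (X ^ L - 1)).coeff k) * X ^ ((k + d) % L) := by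
  have hf : (X ^ L - 1 : R[X]).Monic := monic_X_pow_sub_one hL
  set g := p %ₘ (X ^ L - 1)
  have hXg : X ^ d * g = ∑ k ∈ Finset.range L, C (g.coeff k) * X ^ (k + d) := by
    conv_lhs => rw [as_sum_range_C_mul_X_pow' g (natDegree_modByMonic_X_pow_sub_one_lt hL p)]
    rw [Finset.mul_sum]
    exact Finset.sum_congr rfl fun k _ => by ring
  have hsplit : X ^ d * p - ∑ k ∈ Finset.range L, C (g.coeff k) * X ^ ((k + d) % L) =
      X ^ d * (p - g) +
        ∑ k ∈ Finset.range L, C (g.coeff k) * (X ^ (k + d) - X ^ ((k + d) % L)) := by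
    simp only [mul_sub, hXg, Finset.sum_sub_distrib]
    ring
  rw [modByMonic_eq_of_dvd_sub hf, (modByMonic_eq_self_iff hf).2]
  · rw [degree_X_pow_sub_one hL]
    refine (degree_sum_le _ _).trans_lt
      ((Finset.sup_lt_iff (WithBot.bot_lt_coe L)).2 fun k _ => ?_)
    exact (degree_C_mul_X_pow_le _ _).trans_lt
      (WithBot.coe_lt_coe.2 (Nat.mod_lt _ (Nat.pos_of_ne_zero hL)))
  · rw [hsplit]
    exact dvd_add (dvd_mul_of_dvd_right (dvd_sub_modByMonic p _) _) (Finset.dvd_sum fun k _ =>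
      dvd_mul_of_dvd_right (X_pow_sub_one_dvd_X_pow_sub_X_pow_mod L _) _)

lemma coeff_X_pow_mul_modByMonic_X_pow_sub_one {L : ℕ} (d : ℕ) (p : R[X]) {j : ℕ}
    (hj : j < L) :
    ((X ^ d * p) %ₘ (X ^ L - 1)).coeff ((j + d) % L) = (p %ₘ (X ^ L - 1)).coeff j := by
  rw [X_pow_mul_modByMonic_X_pow_sub_one (Nat.ne_zero_of_lt hj), finsetSum_coeff,
    Finset.sum_eq_single j]
  · simp
  · intro k hk hkj
    rw [coeff_C_mul_X_pow, if_neg]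
    intro h
    exact hkj ((Nat.ModEq.add_right_cancel' d h.symm).eq_of_lt_of_lt (Finset.mem_range.1 hk) hj)
  · simp [hj]

end CommRing

lemma exists_degree_lt_coeff_mul_eq {K : Type*} [Field K] {q : K[X]} (hq : q.coeff 0 ≠ 0)
    (m : ℕ) (y : K[X]) : ∃ w : K[X], w.degree < m ∧ ∀ j < m, (q * w).coeff j = y.coeff j := by
  obtain ⟨u, v, huv⟩ : IsCoprime q (X ^ m) :=
    ((irreducible_X.coprime_iff_not_dvd).2 (X_dvd_iff.not.2 hq)).symm.pow_right
  refine ⟨(u * y) %ₘ X ^ m, by simpa using degree_modByMonic_lt (u * y) (monic_X_pow m),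
    fun j hj => ?_⟩
  have hy : q * ((u * y) %ₘ X ^ m) = y - X ^ m * (v * y + q * ((u * y) /ₘ X ^ m)) := by
    rw [modByMonic_eq_sub_mul_div]
    linear_combination y * huv
  rw [hy, coeff_sub, coeff_X_pow_mul', if_neg (by omega), sub_zero]

end Polynomial

lemma card_fiber_mul_card_of_surjective {M N : Type*} [AddGroup M] [AddGroup N] [Finite M]
    (T : M →+ N) (hT : Function.Surjective T) (y : N) :
    Nat.card {x // T x = y} * Nat.card N = Nat.card M := by
  classical
  have := Fintype.ofFinite M
  have := Fintype.ofSurjective T hT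
  rw [Nat.card_eq_fintype_card (α := M), ← Finset.card_univ,
    Finset.card_eq_sum_card_fiberwise (f := T) (t := Finset.univ) (fun _ _ => Finset.mem_univ _),
    Finset.sum_congr rfl fun y' _ => AddMonoidHom.card_fiber_eq_of_mem_range T (hT y') (hT y),
    Finset.sum_const, Finset.card_univ, smul_eq_mul, Nat.card_eq_fintype_card,
    Nat.card_eq_fintype_card, Fintype.card_subtype, mul_comm]

lemma prob_map_eq_one_div_card {Ω M N : Type*} [AddGroup M] [AddGroup N] [Finite M]
    (e : Ω ≃ M) (T : M →+ N) (hT : Function.Surjective T) (y : N) :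
    prob Ω (fun ω => T (e ω) = y) = 1 / Nat.card N := by
  have hpos : 0 < Nat.card {x // T x = y} :=
    Nat.card_pos_iff.2 ⟨⟨_, (hT y).choose_spec⟩, inferInstance⟩
  rw [prob, Nat.card_congr (e.subtypeEquiv (q := fun x => T x = y) fun _ => Iff.rfl),
    Nat.card_congr e, ← card_fiber_mul_card_of_surjective T hT y, Nat.cast_mul]
  field_simp

namespace CyclicHashing

noncomputable def cyclicWindow {R : Type*} [CommRing R] (L r m : ℕ) : R[X] →ₗ[R] (Fin m → R) :=
  LinearMap.pi fun j => (lcoeff R ((r + j) % L)).comp (modByMonicHom (X ^ L - 1))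

variable {K : Type*} [Field K]

theorem exists_mem_degreeLT_cyclicWindow_mul_eq {q : K[X]} (hq : q ≠ 0) {n L : ℕ}
    (hqn : q.natDegree < n) (hnL : n ≤ L) (r : ℕ) (y : Fin (L - n + 1) → K) :
    ∃ z ∈ degreeLT K L, cyclicWindow L r (L - n + 1) (q * z) = y := by
  obtain ⟨q₀, hq₀, hX⟩ := exists_eq_pow_rootMultiplicity_mul_and_not_dvd q hq 0
  rw [map_zero, sub_zero] at hq₀ hX
  set e := q.rootMultiplicity 0
  have hq₀ne : q₀ ≠ 0 := by rintro rfl; exact hq (by rw [hq₀, mul_zero])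
  have hdeg : e + q₀.natDegree = q.natDegree := by
    conv_rhs => rw [hq₀]
    rw [natDegree_mul (pow_ne_zero _ X_ne_zero) hq₀ne, natDegree_X_pow]
  have hL : L ≠ 0 := by omega
  have hf : (X ^ L - 1 : K[X]).Monic := monic_X_pow_sub_one hL
  obtain ⟨w, hw, hcoeff⟩ :=
    exists_degree_lt_coeff_mul_eq (X_dvd_iff.not.1 hX) (L - n + 1) ((degreeLTEquiv K _).symm y)
  have hprod : q * (X ^ (L - e + r) * w) = X ^ (L + r) * (q₀ * w) := by
    conv_lhs => rw [hq₀]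
    rw [show L + r = e + (L - e + r) by omega, pow_add]
    ring
  have hsmall : (q₀ * w) %ₘ (X ^ L - 1) = q₀ * w := by
    refine (modByMonic_eq_self_iff hf).2 ?_
    rw [degree_X_pow_sub_one hL]
    by_cases hw0 : w = 0
    · simp [hw0]
    have hwn : w.natDegree < L - n + 1 := (natDegree_lt_iff_degree_lt hw0).2 hw
    have : q₀.natDegree + w.natDegree < L := by omega
    exact degree_le_natDegree.trans_lt (by exact_mod_cast natDegree_mul_le.trans_lt this)
  -- `X ^ (L - e + r)` cancels `X ^ e` and moves position `0` of `q₀ * w` to position `r`.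
  refine ⟨(X ^ (L - e + r) * w) %ₘ (X ^ L - 1), mem_degreeLT.2 ?_, funext fun j => ?_⟩
  · exact degree_X_pow_sub_one (R := K) hL ▸ degree_modByMonic_lt _ hf
  calc cyclicWindow L r (L - n + 1) (q * ((X ^ (L - e + r) * w) %ₘ (X ^ L - 1))) j
      = ((q * ((X ^ (L - e + r) * w) %ₘ (X ^ L - 1))) %ₘ (X ^ L - 1)).coeff ((r + j) % L) := rfl
    _ = ((X ^ (L + r) * (q₀ * w)) %ₘ (X ^ L - 1)).coeff ((j + (L + r)) % L) := by
        rw [show (j : ℕ) + (L + r) = r + j + L by omega, Nat.add_mod_right, ← hprod,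
          mul_modByMonic_modByMonic hf]
    _ = y j := by
        rw [coeff_X_pow_mul_modByMonic_X_pow_sub_one _ _ (by omega), hsmall, hcoeff j j.2]
        simp [degreeLTEquiv, coeff_monomial, Fin.val_inj]

variable {σ : Type*} {n : ℕ}

variable (K) in
noncomputable def cyclicHash (a : Fin n → σ) : (σ → K[X]) →ₗ[K] K[X] where
  toFun h := ∑ i, h (a i) * X ^ (n - 1 - (i : ℕ))
  map_add' h g := by simp only [Pi.add_apply, add_mul, Finset.sum_add_distrib]
  map_smul' c h := by
    simp only [Pi.smul_apply, smul_mul_assoc, Finset.smul_sum, RingHom.id_apply]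

noncomputable def positionPoly (p : Fin n → Prop) [DecidablePred p] : K[X] :=
  ∑ i, if p i then X ^ (n - 1 - (i : ℕ)) else 0

lemma natDegree_positionPoly_le (p : Fin n → Prop) [DecidablePred p] :
    (positionPoly p : K[X]).natDegree ≤ n - 1 := by
  refine natDegree_sum_le_of_forall_le _ _ fun i _ => ?_
  split_ifs
  · exact (natDegree_X_pow_le _).trans (Nat.sub_le _ _)
  · simp

lemma coeff_positionPoly (p : Fin n → Prop) [DecidablePred p] (i : Fin n) :
    (positionPoly p : K[X]).coeff (n - 1 - i) = if p i then 1 else 0 := by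
  rw [positionPoly, finsetSum_coeff, Finset.sum_eq_single i]
  · split_ifs <;> simp
  · intro k _ hki
    split_ifs
    · rw [coeff_X_pow, if_neg]
      intro h
      exact hki (Fin.ext (by omega))
    · simp
  · simp

lemma cyclicHash_add_ite [DecidableEq σ] (a : Fin n → σ) (g z : K[X]) (c : σ) :
    cyclicHash K a (fun d => g + if d = c then z else 0) =
      positionPoly (fun _ : Fin n => True) * g + positionPoly (a · = c) * z := by
  simp only [cyclicHash, positionPoly, LinearMap.coe_mk, AddHom.coe_mk, add_mul,
    Finset.sum_add_distrib, Finset.sum_mul, ite_mul, zero_mul, if_true]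
  congr 1 <;> refine Finset.sum_congr rfl fun i _ => ?_
  · ring
  · split_ifs <;> ring

variable (K) in
noncomputable def cyclicHashPair (L r m : ℕ) (a a' : Fin n → σ) :
    (σ → degreeLT K L) →ₗ[K] (Fin m → K) × (Fin m → K) :=
  ((cyclicWindow L r m ∘ₗ cyclicHash K a).prod (cyclicWindow L r m ∘ₗ cyclicHash K a')) ∘ₗ
    (degreeLT K L).subtype.compLeft σ

theorem cyclicHashPair_surjective {L : ℕ} {a a' : Fin n → σ} (haa : a ≠ a') (hnL : n ≤ L)
    (r : ℕ) : Function.Surjective (cyclicHashPair K L r (L - n + 1) a a') := by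
  classical
  rintro ⟨u, v⟩
  obtain ⟨i₀, hi₀⟩ := Function.ne_iff.1 haa
  have hdeg (p : Fin n → Prop) [DecidablePred p] : (positionPoly p : K[X]).natDegree < n :=
    (natDegree_positionPoly_le p).trans_lt (by have := i₀.isLt; omega)
  have hS : (positionPoly fun _ : Fin n => True : K[X]) ≠ 0 := fun h => by
    simpa [h] using coeff_positionPoly (K := K) (fun _ : Fin n => True) i₀
  have hP : (positionPoly (a · = a i₀) - positionPoly (a' · = a i₀) : K[X]) ≠ 0 := fun h => by
    have := congrArg (coeff · (n - 1 - i₀)) h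
    simp [coeff_positionPoly, Ne.symm hi₀] at this
  obtain ⟨z, hz, hzw⟩ := exists_mem_degreeLT_cyclicWindow_mul_eq hP
    ((natDegree_sub_le _ _).trans_lt (max_lt (hdeg _) (hdeg _))) hnL r (u - v)
  obtain ⟨g, hg, hgw⟩ := exists_mem_degreeLT_cyclicWindow_mul_eq hS (hdeg _) hnL r
    (u - cyclicWindow L r _ (positionPoly (a · = a i₀) * z))
  refine ⟨fun c => ⟨g + if c = a i₀ then z else 0,
    add_mem hg (by split_ifs; exacts [hz, zero_mem _])⟩, ?_⟩
  have hwin (b : Fin n → σ) : cyclicWindow L r (L - n + 1)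
      (cyclicHash K b (fun c => g + if c = a i₀ then z else 0)) =
      u - cyclicWindow L r _ (positionPoly (a · = a i₀) * z) +
        cyclicWindow L r _ (positionPoly (b · = a i₀) * z) := by
    rw [cyclicHash_add_ite b g z (a i₀), map_add, hgw]
  rw [sub_mul, map_sub] at hzw
  refine Prod.ext ?_ ?_
  · exact (hwin a).trans (sub_add_cancel _ _)
  · exact (hwin a').trans (by linear_combination -hzw)

lemma forall_remaining_position_iff {L n s : ℕ} (hn : 0 < n) (hnL : n ≤ L) (P : ℕ → Prop) :
    (∀ k < L, (∀ t < n - 1, k ≠ (s + t) % L) → P k) ↔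
      ∀ j : Fin (L - n + 1), P ((s + (n - 1) + j) % L) := by
  constructor
  · intro h j
    refine h _ (Nat.mod_lt _ (by omega)) fun t ht heq => ?_
    rw [add_assoc] at heq
    have := (Nat.ModEq.add_left_cancel' s heq).eq_of_lt_of_lt (by omega) (by omega)
    omega
  · intro h k hk hk'
    set u := (k + (L - s % L)) % L
    have hsu : (s + u) % L = k := by
      have := Nat.mod_add_div s L
      have := Nat.mod_lt s (show 0 < L by omega)
      rw [Nat.add_mod_mod, show s + (k + (L - s % L)) = k + L * (s / L) + L by omega,
        Nat.add_mod_right, Nat.add_mul_mod_self_left, Nat.mod_eq_of_lt hk]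
    have hu : n - 1 ≤ u := by
      by_contra hlt
      exact hk' u (by omega) hsu.symm
    have hul : u < L := Nat.mod_lt _ (by omega)
    simpa [show s + (n - 1) + (u - (n - 1)) = s + u by omega, hsu] using h ⟨u - (n - 1), by omega⟩

end CyclicHashing

open CyclicHashing

theorem cyclic_pairwise_independent_after_discarding_bits_general
    {σ : Type*} [Fintype σ] (n L s : ℕ) (hnL : n ≤ L)
    (a a' : Fin n → σ) (haa : a ≠ a') (y y' : Polynomial (ZMod 2)) :
    prob (σ → {w : Polynomial (ZMod 2) // w.degree < (L : WithBot ℕ)})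
      (fun h₁ =>
        (∀ k < L, (∀ t < n - 1, k ≠ (s + t) % L) →
          ((∑ i : Fin n, (h₁ (a i)).val * X ^ (n - 1 - (i : ℕ)))
            %ₘ ((X : Polynomial (ZMod 2)) ^ L + 1)).coeff k = y.coeff k) ∧
        (∀ k < L, (∀ t < n - 1, k ≠ (s + t) % L) →
          ((∑ i : Fin n, (h₁ (a' i)).val * X ^ (n - 1 - (i : ℕ)))
            %ₘ ((X : Polynomial (ZMod 2)) ^ L + 1)).coeff k = y'.coeff k))
      = 1 / 2 ^ (2 * (L - n + 1)) := by
  have hn : 0 < n := Nat.pos_of_ne_zero fun h => haa (by subst h; exact Subsingleton.elim _ _)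
  have hmod : (X ^ L + 1 : (ZMod 2)[X]) = X ^ L - 1 := (CharTwo.sub_eq_add _ _).symm
  have : Finite (degreeLT (ZMod 2) L) := .of_equiv _ (degreeLTEquiv (ZMod 2) L).toEquiv.symm
  let e : (σ → {w : (ZMod 2)[X] // w.degree < L}) ≃ (σ → degreeLT (ZMod 2) L) :=
    Equiv.piCongrRight fun _ => Equiv.subtypeEquivRight fun _ => mem_degreeLT.symm
  let T := (cyclicHashPair (ZMod 2) L (s + (n - 1)) (L - n + 1) a a').toAddMonoidHom
  let window (p : (ZMod 2)[X]) (j : Fin (L - n + 1)) := p.coeff ((s + (n - 1) + j) % L)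
  calc _ = prob _ fun h₁ => T (e h₁) = (window y, window y') := by
        simp only [hmod, forall_remaining_position_iff hn hnL, Prod.ext_iff, funext_iff]
        rfl
    _ = 1 / 2 ^ (2 * (L - n + 1)) := by
        rw [prob_map_eq_one_div_card e T (cyclicHashPair_surjective haa hnL _)]
        simp [← pow_add, two_mul]

/-- Cyclic hashing is pairwise independent after discarding any n−1 consecutive
(mod L) bits. -/
theorem cyclic_pairwise_independent_after_discarding_bits
    {σ : Type*} [Fintype σ] (n L s : ℕ) (hn : 0 < n) (hnL : n ≤ L)
    (a a' : Fin n → σ) (haa : a ≠ a') (y y' : Polynomial (ZMod 2)) :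
    prob (σ → {w : Polynomial (ZMod 2) // w.degree < (L : WithBot ℕ)})
      (fun h₁ =>
        (∀ k < L, (∀ t < n - 1, k ≠ (s + t) % L) →
          ((∑ i : Fin n, (h₁ (a i)).val * X ^ (n - 1 - (i : ℕ)))
            %ₘ ((X : Polynomial (ZMod 2)) ^ L + 1)).coeff k = y.coeff k) ∧
        (∀ k < L, (∀ t < n - 1, k ≠ (s + t) % L) →
          ((∑ i : Fin n, (h₁ (a' i)).val * X ^ (n - 1 - (i : ℕ)))
            %ₘ ((X : Polynomial (ZMod 2)) ^ L + 1)).coeff k = y'.coeff k))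
      = 1 / 2 ^ (2 * (L - n + 1)) :=
  cyclic_pairwise_independent_after_discarding_bits_general n L s hnL a a' haa y y'
end
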